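/- arXiv:2311.16287 — 3 statements merged into one kernel-verified Lean document; each statement's English description precedes it below -/
import Mathlib

section
/- For every natural number n ≥ 0, the coefficient of u^n in the formal power series (in the variable u, with coefficients in the polynomial ring ℤ[t]) given by the finite product ∏_{k=1}^{n} (1 - t^{2k-2} u^k)^{-1} equals the polynomial ∑_{λ ⊢ n} t^{2(n - ℓ(λ))}, where the sum runs over all partitions λ of n. (This is the generating-function identity ∑_{n≥0} u^n ∑_{λ⊢n} t^{2(n-ℓ(λ))} = ∏_{k≥1} (1 - t^{2k-2} u^k)^{-1} from the Betti number computation of the Hilbert scheme of points on ℂ²; factors with index k > n do not affect the coefficient of u^n, so the finite product suffices.) -/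
/-!
Each factor is a geometric series, `(1 - w_k u^k)⁻¹ = ∑_c w_k^c u^{kc}`, so the coefficient of
`u^n` in the product is a sum over the ways of writing `n = ∑_k c_k k`, i.e. over the
partitions `λ ⊢ n` with `c_k` parts equal to `k`, each weighted by `∏_{i} w_{λ_i}`.
For `w_k = t^{2k-2}` this weight is `t^{∑ (2λ_i - 2)} = t^{2(n - ℓ(λ))}`.
-/

open PowerSeries Finset

theorem Multiset.prod_map_pow_eq_pow_sum {M : Type*} [CommMonoid M] (a : M) (f : ℕ → ℕ)
    (s : Multiset ℕ) : (s.map fun j => a ^ f j).prod = a ^ (s.map f).sum := by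
  induction s using Multiset.induction with
  | empty => simp
  | cons j s ih => simp [ih, pow_add]

theorem PowerSeries.inverse_one_sub_C_mul_X_pow {R : Type*} [CommRing R] (a : R) {k : ℕ}
    (hk : 0 < k) :
    Ring.inverse (1 - C a * X ^ k) = mk fun m => if k ∣ m then a ^ (m / k) else 0 := by
  set G : R⟦X⟧ := mk fun m => if k ∣ m then a ^ (m / k) else 0
  have hshift : C a * X ^ k * G = G - 1 := by
    ext m
    rw [mul_comm, ← mul_assoc, coeff_mul_X_pow', coeff_mul_C, map_sub, coeff_one]
    rcases le_or_gt k m with hkm | hm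
    · obtain ⟨j, rfl⟩ := Nat.exists_eq_add_of_le hkm
      simp only [G, coeff_mk, if_pos hkm, Nat.add_sub_cancel_left, Nat.dvd_add_self_left,
        Nat.add_div_left _ hk, pow_succ, ite_mul, zero_mul, if_neg (show k + j ≠ 0 by omega),
        sub_zero]
    · rcases Nat.eq_zero_or_pos m with rfl | hm0
      · simp [G, Nat.not_le.mpr hk]
      · simp [G, Nat.not_le.mpr hm, Nat.not_dvd_of_pos_of_lt hm0 hm, hm0.ne']
  have hinv : (1 - C a * X ^ k) * G = 1 := by rw [sub_mul, hshift]; ring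
  exact Ring.inverse_unit (Units.mkOfMulEqOne _ G hinv)

namespace Nat.Partition

@[simp]
theorem toFinsuppAntidiag_apply {n : ℕ} (p : n.Partition) (i : ℕ) :
    p.toFinsuppAntidiag i = p.parts.count i * i :=
  rfl

theorem mem_range_toFinsuppAntidiag {n : ℕ} {l : ℕ →₀ ℕ}
    (hl : l ∈ (Icc 1 n).finsuppAntidiag n) (hdvd : ∀ k ∈ Icc 1 n, k ∣ l k) :
    l ∈ Set.range (toFinsuppAntidiag (n := n)) := by
  rw [mem_finsuppAntidiag] at hl
  have hsum : (∑ k ∈ Icc 1 n, Multiset.replicate (l k / k) k).sum = n := by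
    simp_rw [Multiset.sum_sum, Multiset.sum_replicate, smul_eq_mul]
    exact (sum_congr rfl fun k hk => Nat.div_mul_cancel (hdvd k hk)).trans hl.1
  refine ⟨ofSums n _ hsum, Finsupp.ext fun i => ?_⟩
  rw [toFinsuppAntidiag_apply]
  by_cases hi : i ∈ Icc 1 n
  · have hi0 : i ≠ 0 := Nat.one_le_iff_ne_zero.mp (mem_Icc.mp hi).1
    rw [count_ofSums_of_ne_zero _ hi0, Multiset.count_sum']
    simp only [Multiset.count_replicate, sum_ite_eq', if_pos hi]
    exact Nat.div_mul_cancel (hdvd i hi)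
  · have hli : l i = 0 := Finsupp.notMem_support_iff.mp fun h => hi (hl.2 h)
    rw [hli, mul_eq_zero, or_iff_not_imp_right]
    intro hi0
    rw [count_ofSums_of_ne_zero _ hi0, Multiset.count_sum']
    simp [Multiset.count_replicate, hi]

theorem coeff_prod_mk_ite_dvd_pow {R : Type*} [CommSemiring R] (n : ℕ) (w : ℕ → R) :
    coeff n (∏ k ∈ Icc 1 n, PowerSeries.mk fun m => if k ∣ m then w k ^ (m / k) else 0) =
      ∑ p : n.Partition, (p.parts.map w).prod := by
  rw [coeff_prod]
  simp only [coeff_mk, prod_ite_zero]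
  symm
  refine sum_of_injOn toFinsuppAntidiag (toFinsuppAntidiag_injective n).injOn
    (fun p _ => toFinsuppAntidiag_mem_finsuppAntidiag p) ?_ ?_
  · intro l hl hl'
    rw [if_neg]
    exact fun hdvd => hl' (by simpa using mem_range_toFinsuppAntidiag hl hdvd)
  · intro p _
    have hparts : p.parts.toFinset ⊆ Icc 1 n := fun i hi => by
      have := Multiset.mem_toFinset.mp hi
      exact mem_Icc.mpr ⟨p.parts_pos this, p.le_of_mem_parts this⟩
    simp only [toFinsuppAntidiag_apply, dvd_mul_left, implies_true, if_true]
    rw [prod_multiset_map_count]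
    refine (prod_subset hparts fun k _ hk => ?_).trans (prod_congr rfl fun k hk => ?_)
    · rw [Multiset.count_eq_zero.mpr (by simpa using hk), pow_zero]
    · rw [Nat.mul_div_cancel _ (mem_Icc.mp hk).1]

theorem coeff_prod_inverse_one_sub_C_mul_X_pow {R : Type*} [CommRing R] (n : ℕ) (w : ℕ → R) :
    coeff n (∏ k ∈ Icc 1 n, Ring.inverse (1 - C (w k) * X ^ k)) =
      ∑ p : n.Partition, (p.parts.map w).prod := by
  rw [prod_congr rfl fun k hk => inverse_one_sub_C_mul_X_pow (w k) (mem_Icc.mp hk).1,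
    coeff_prod_mk_ite_dvd_pow]

theorem sum_map_two_mul_sub_two {n : ℕ} (p : n.Partition) :
    (p.parts.map fun k => 2 * k - 2).sum = 2 * (n - p.parts.card) := by
  have key : ∀ s : Multiset ℕ, (∀ j ∈ s, 0 < j) →
      (s.map fun j => 2 * j - 2).sum + 2 * Multiset.card s = 2 * s.sum := by
    intro s
    induction s using Multiset.induction with
    | empty => simp
    | cons a s ih =>
      intro hpos
      have ha := hpos a (Multiset.mem_cons_self a s)
      have hs := ih fun j hj => hpos j (Multiset.mem_cons_of_mem hj)
      simp only [Multiset.map_cons, Multiset.sum_cons, Multiset.card_cons]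
      omega
  have := key p.parts fun j hj => p.parts_pos hj
  rw [p.parts_sum] at this
  omega

end Nat.Partition

/-- The coefficient of `u^n` in `∏_{k=1}^{n} (1 - t^{2k-2} u^k)⁻¹` (a power series in `u`
with coefficients in `ℤ[t]`) equals `∑_{λ ⊢ n} t^{2(n - ℓ(λ))}`. -/
theorem stmt0 (n : ℕ) :
    PowerSeries.coeff (R := Polynomial ℤ) n
      (∏ k ∈ Finset.Icc 1 n,
        Ring.inverse (1 - PowerSeries.C (R := Polynomial ℤ) (Polynomial.X ^ (2 * k - 2)) *
          (PowerSeries.X : PowerSeries (Polynomial ℤ)) ^ k)) =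
    ∑ p : Nat.Partition n, (Polynomial.X : Polynomial ℤ) ^ (2 * (n - p.parts.card)) := by
  rw [Nat.Partition.coeff_prod_inverse_one_sub_C_mul_X_pow n fun k => Polynomial.X ^ (2 * k - 2)]
  refine sum_congr rfl fun p _ => ?_
  rw [Multiset.prod_map_pow_eq_pow_sum, Nat.Partition.sum_map_two_mul_sub_two]
end

section
/- For every natural number n ≥ 0, the coefficient of u^n in the formal power series (in the variable u, with coefficients in the polynomial ring ℤ[t]) given by the finite product ∏_{m=0}^{n} (1 - t^{2m} u^{2m+1})^{-1} (1 - t^{2m} u^{2m+2})^{-1} equals the polynomial ∑_{λ ⊢ n} t^{n - ℓ(λ) - ℓ_even(λ)}, where the sum runs over all partitions λ of n. (This is the generating-function identity ∑_{n≥0} u^n ∑_{λ⊢n} t^{n-ℓ(λ)-ℓ_even(λ)} = ∏_{m≥0} [(1 - t^{2m}u^{2m+1})(1 - t^{2m}u^{2m+2})]^{-1} arising from the Betti numbers of the fixed-point set ((ℂ²)^{[n]})^τ; factors with index m > n do not affect the coefficient of u^n.) -/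
/-!
A part `k` of `λ` contributes `k - 1 - [k even]` to the exponent `n - ℓ(λ) - ℓ_even(λ)`, so
the polynomial is the weighted partition count with weight `t^(k - 1 - [k even])` per part `k`.
By Euler's argument its generating function is `∏_k (1 - t^(k - 1 - [k even]) u^k)⁻¹`, and the
parts `k = 2m + 1` and `k = 2m + 2` both carry the weight `t^(2m)`.
-/

open Finset PowerSeries
open scoped PowerSeries.WithPiTopology

theorem Finset.prod_range_two_mul {M : Type*} [CommMonoid M] (f : ℕ → M) (N : ℕ) :
    ∏ i ∈ range (2 * N), f i = ∏ m ∈ range N, f (2 * m) * f (2 * m + 1) := by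
  induction N with
  | zero => simp
  | succ N ih => rw [mul_add_one, prod_range_succ, prod_range_succ, prod_range_succ, ih, mul_assoc]

theorem Multiset.sum_map_sub_one_sub_ite_even_add_card_add_card_filter {s : Multiset ℕ}
    (hs : ∀ i ∈ s, 0 < i) :
    (s.map fun i ↦ i - 1 - if Even i then 1 else 0).sum + card s + card (s.filter Even) =
      s.sum := by
  induction s using Multiset.induction_on with
  | empty => simp
  | cons a s ih =>
    have ha : 0 < a := hs a (mem_cons_self a s)
    have ih := ih fun i hi ↦ hs i (mem_cons_of_mem hi)
    by_cases he : Even a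
    · have : a ≠ 1 := by rintro rfl; exact Nat.not_even_one he
      simp only [map_cons, sum_cons, card_cons, filter_cons_of_pos _ he, if_pos he]
      omega
    · simp only [map_cons, sum_cons, card_cons, filter_cons_of_neg _ he, if_neg he]
      omega

theorem Multiset.prod_map_pow_eq_pow_sum_map {ι M : Type*} [CommMonoid M] (a : M) (f : ι → ℕ)
    (s : Multiset ι) : (s.map fun i ↦ a ^ f i).prod = a ^ (s.map f).sum := by
  induction s using Multiset.induction_on with
  | empty => simp
  | cons x s ih => simp [ih, pow_add]

namespace PowerSeries

theorem one_add_tsum_smul_X_pow_eq_inverse {R : Type*} [CommRing R] [TopologicalSpace R]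
    [IsTopologicalRing R] [T2Space R] (a : R) {k : ℕ} (hk : k ≠ 0) :
    1 + ∑' j, a ^ (j + 1) • (X : R⟦X⟧) ^ (k * (j + 1)) =
      Ring.inverse (1 - C a * X ^ k) := by
  have h0 : constantCoeff (C a * X ^ k : R⟦X⟧) = 0 := by simp [hk]
  have hgeom :
      1 + ∑' j, a ^ (j + 1) • (X : R⟦X⟧) ^ (k * (j + 1)) = ∑' j, (C a * X ^ k) ^ j := by
    rw [(WithPiTopology.summable_pow_of_constantCoeff_eq_zero h0).tsum_eq_zero_add]
    simp [mul_pow, ← pow_mul, smul_eq_C_mul]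
  have hinv := WithPiTopology.one_sub_mul_tsum_pow_of_constantCoeff_eq_zero h0
  rw [hgeom, eq_comm, ← mul_one (Ring.inverse _),
    Ring.inverse_mul_eq_iff_eq_mul _ _ _ (IsUnit.of_mul_eq_one _ hinv), hinv]

theorem coeff_prod_range_inverse_one_sub_C_mul_X_pow {R : Type*} [CommRing R] (w : ℕ → R)
    {n N : ℕ} (hn : n ≤ N) :
    coeff n (∏ i ∈ range N, Ring.inverse (1 - C (w (i + 1)) * X ^ (i + 1))) =
      ∑ p : n.Partition, (p.parts.map w).prod := by
  let _ : TopologicalSpace R := ⊥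
  have : DiscreteTopology R := ⟨rfl⟩
  -- cutting the weights off at `N` makes the infinite product of `Nat.Partition.genFun` ours
  let f : ℕ → ℕ → R := fun i c ↦ if i ≤ N then w i ^ c else 0
  have hprod : ∏ i ∈ range N, Ring.inverse (1 - C (w (i + 1)) * X ^ (i + 1)) =
      Nat.Partition.genFun f := by
    rw [Nat.Partition.genFun_eq_tprod, tprod_eq_prod (s := range N)]
    · refine prod_congr rfl fun i hi ↦ ?_
      rw [← one_add_tsum_smul_X_pow_eq_inverse _ i.succ_ne_zero]
      simp [f, show i + 1 ≤ N by simpa using hi]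
    · intro i hi
      simp [f, show ¬i + 1 ≤ N by simpa using hi]
  rw [hprod, Nat.Partition.coeff_genFun]
  refine sum_congr rfl fun p _ ↦ ?_
  rw [Finset.prod_multiset_map_count, Finsupp.prod, Multiset.toFinsupp_support]
  refine prod_congr rfl fun i hi ↦ ?_
  have hi : i ≤ N := calc
      i ≤ p.parts.sum := Multiset.le_sum_of_mem (Multiset.mem_toFinset.mp hi)
      _ ≤ N := p.parts_sum.trans_le hn
  simp [f, hi]

end PowerSeries

/-- The coefficient of `u^n` in `∏_{m=0}^{n} (1 - t^{2m} u^{2m+1})⁻¹ (1 - t^{2m} u^{2m+2})⁻¹`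
(a power series in `u` with coefficients in `ℤ[t]`) equals
`∑_{λ ⊢ n} t^{n - ℓ(λ) - ℓ_even(λ)}`. -/
theorem stmt1 (n : ℕ) :
    PowerSeries.coeff (R := Polynomial ℤ) n
      (∏ m ∈ Finset.range (n + 1),
        (Ring.inverse (1 - PowerSeries.C (R := Polynomial ℤ) (Polynomial.X ^ (2 * m)) *
            (PowerSeries.X : PowerSeries (Polynomial ℤ)) ^ (2 * m + 1)) *
         Ring.inverse (1 - PowerSeries.C (R := Polynomial ℤ) (Polynomial.X ^ (2 * m)) *
            (PowerSeries.X : PowerSeries (Polynomial ℤ)) ^ (2 * m + 2)))) =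
    ∑ p : Nat.Partition n,
      (Polynomial.X : Polynomial ℤ) ^
        (n - p.parts.card - (p.parts.filter (fun i => Even i)).card) := by
  let e : ℕ → ℕ := fun k ↦ k - 1 - if Even k then 1 else 0
  have he : ∀ m, e (2 * m + 1) = 2 * m ∧ e (2 * m + 2) = 2 * m := fun m ↦ by
    simp [e, Nat.even_add_one, parity_simps]
  let w : ℕ → Polynomial ℤ := fun k ↦ Polynomial.X ^ e k
  have hprod :=
    prod_range_two_mul (fun i ↦ Ring.inverse (1 - C (w (i + 1)) * X ^ (i + 1))) (n + 1)
  simp only [w, he] at hprod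
  rw [← hprod, coeff_prod_range_inverse_one_sub_C_mul_X_pow w (by omega)]
  refine sum_congr rfl fun p _ ↦ ?_
  rw [Multiset.prod_map_pow_eq_pow_sum_map]
  have hexp : (p.parts.map e).sum + p.parts.card + (p.parts.filter fun i ↦ Even i).card = n :=
    (Multiset.sum_map_sub_one_sub_ite_even_add_card_add_card_filter fun _ ↦ p.parts_pos).trans
      p.parts_sum
  congr 1
  omega
end

section
/- Let λ be a partition of n with parts λ_1 ≥ ⋯ ≥ λ_k > 0 and let I_λ ⊆ ℂ[x,y] be the ideal generated by x^a y^{λ_{a+1}} for 0 ≤ a ≤ k−1 together with x^k. Let σ be the ℂ-algebra automorphism of ℂ[x,y] determined by σ(x) = x and σ(y) = −y. Then σ maps I_λ to itself, hence induces a ℂ-linear involution of the n-dimensional quotient ℂ[x,y]/I_λ; the +1-eigenspace of this involution has dimension (n + ℓ_odd(λ))/2 and the −1-eigenspace has dimension (n − ℓ_odd(λ))/2, where ℓ_odd(λ) is the number of odd parts of λ. In particular n ≡ ℓ_odd(λ) (mod 2). -/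
/-!
`I_λ` is a monomial ideal, so the classes of the monomials `x^a y^j` outside it, one for each
cell `(a, j)` of the Young diagram of `λ`, form a basis of `ℂ[x,y]/I_λ`. The involution `σ`
multiplies `x^a y^j` by `(-1)^j`, so this basis diagonalises it and the `+1`-eigenspace is
spanned by the cells in even columns. A row of length `m` has `(m + m % 2) / 2` of them, and
summing over the rows gives `(n + ℓ_odd(λ)) / 2`.
-/

open MvPolynomial

namespace Module.End

variable {K V ι : Type*} [Field K] [AddCommGroup V] [Module K V]

theorem repr_apply_of_eigenbasis {b : Module.Basis ι K V} {T : End K V} {μ : ι → K}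
    (hT : ∀ i, T (b i) = μ i • b i) (v : V) (i : ι) :
    b.repr (T v) i = μ i * b.repr v i := by
  have : Finsupp.lapply i ∘ₗ b.repr.toLinearMap ∘ₗ T =
      μ i • (Finsupp.lapply i ∘ₗ b.repr.toLinearMap) := by
    refine b.ext fun j => ?_
    by_cases hij : j = i
    · subst hij; simp [hT]
    · simp [hT, hij]
  exact LinearMap.congr_fun this v

theorem eigenspace_eq_span_of_eigenbasis (b : Module.Basis ι K V) {T : End K V} {μ : ι → K}
    (hT : ∀ i, T (b i) = μ i • b i) (c : K) :
    T.eigenspace c = Submodule.span K (b '' {i | μ i = c}) := by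
  ext v
  rw [mem_eigenspace_iff, b.mem_span_image, ← b.repr.injective.eq_iff]
  simp only [Finsupp.ext_iff, repr_apply_of_eigenbasis hT, map_smul, Finsupp.smul_apply,
    smul_eq_mul, Set.subset_def, Finset.mem_coe, Finsupp.mem_support_iff, Set.mem_ofPred_eq,
    mul_eq_mul_right_iff]
  exact forall_congr' fun i => or_iff_not_imp_right

theorem finrank_eigenspace_of_eigenbasis [Fintype ι] (b : Module.Basis ι K V) {T : End K V}
    {μ : ι → K} (hT : ∀ i, T (b i) = μ i • b i) (c : K) :
    Module.finrank K (T.eigenspace c) = Nat.card {i // μ i = c} := by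
  classical
  rw [eigenspace_eq_span_of_eigenbasis b hT, Set.image_eq_range]
  exact (finrank_span_eq_card (b.linearIndependent.comp _ Subtype.val_injective)).trans
    Nat.card_eq_fintype_card.symm

section NegOnePow

variable [Fintype ι] (b : Module.Basis ι K V) {T : End K V} {p : ι → ℕ}

theorem finrank_eigenspace_one_of_neg_one_pow_eigenbasis (hK : (-1 : K) ≠ 1)
    (hT : ∀ i, T (b i) = (-1 : K) ^ p i • b i) :
    Module.finrank K (T.eigenspace 1) = Nat.card {i // Even (p i)} := by
  rw [finrank_eigenspace_of_eigenbasis b hT]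
  simp_rw [neg_one_pow_eq_one_iff_even hK]

theorem finrank_eigenspace_one_add_finrank_eigenspace_neg_one (hK : (-1 : K) ≠ 1)
    (hT : ∀ i, T (b i) = (-1 : K) ^ p i • b i) :
    Module.finrank K (T.eigenspace 1) + Module.finrank K (T.eigenspace (-1)) = Nat.card ι := by
  rw [finrank_eigenspace_of_eigenbasis b hT, finrank_eigenspace_of_eigenbasis b hT]
  simp_rw [neg_one_pow_eq_one_iff_even hK, neg_one_pow_eq_neg_one_iff_odd hK,
    ← Nat.not_even_iff_odd]
  rw [← Nat.card_sum, Nat.card_congr (Equiv.sumCompl _)]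

end NegOnePow

end Module.End

theorem Nat.two_mul_count_even (m : ℕ) : 2 * Nat.count Even m = m + m % 2 := by
  induction m with
  | zero => simp
  | succ m ih =>
    rw [Nat.count_succ]
    rcases Nat.even_or_odd m with h | h
    · simp [h, Nat.even_iff.1 h] at ih ⊢; omega
    · simp [Nat.not_even_iff_odd.2 h, Nat.odd_iff.1 h] at ih ⊢; omega

theorem List.two_mul_sum_map_count_even (l : List ℕ) :
    2 * (l.map (Nat.count Even)).sum = l.sum + (l.filter (fun i => Odd i)).length := by
  induction l with
  | nil => simp
  | cons m l ih =>
    have hm := Nat.two_mul_count_even m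
    rcases Nat.even_or_odd m with h | h
    · simp [Nat.not_odd_iff_even.2 h, Nat.even_iff.1 h] at hm ⊢; omega
    · simp [h, Nat.odd_iff.1 h] at hm ⊢; omega

theorem Nat.card_sigma_fin_even {ι : Type*} [Fintype ι] (f : ι → ℕ) :
    Nat.card {i : Σ a, Fin (f a) // Even (i.2 : ℕ)} = ∑ a, Nat.count Even (f a) := by
  classical
  simp only [Nat.card_eq_fintype_card, Fintype.card_subtype, Finset.card_filter, Fintype.sum_sigma,
    Fin.sum_univ_eq_sum_range (fun j => if Even j then 1 else 0), Nat.count_eq_card_filter_range]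

theorem Ideal.quotientMapₐ_comp_self {R A : Type*} [CommRing R] [CommRing A] [Algebra R A]
    {I : Ideal A} {f : A →ₐ[R] A} (hf : f.comp f = AlgHom.id R A) (h : I ≤ I.comap f) :
    (Ideal.quotientMapₐ I f h).comp (Ideal.quotientMapₐ I f h) = AlgHom.id R (A ⧸ I) := by
  refine Ideal.Quotient.algHom_ext R (AlgHom.ext fun x => ?_)
  simp [← AlgHom.comp_apply f f, hf]

namespace MvPolynomial

variable {σ R : Type*} [CommRing R]

theorem isCompl_restrictSupport_compl (S : Set (σ →₀ ℕ)) :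
    IsCompl (restrictSupport R S) (restrictSupport R Sᶜ) := by
  constructor
  · rw [Submodule.disjoint_def]
    intro f hS hSc
    rw [mem_restrictSupport_iff] at hS hSc
    rw [← support_eq_empty, ← Finset.coe_eq_empty]
    simpa using Set.subset_inter hS hSc
  · rw [codisjoint_iff, restrictSupport_eq_span, restrictSupport_eq_span, ← Submodule.span_union,
      ← Set.image_union, Set.union_compl_self, ← restrictSupport_eq_span, restrictSupport_univ]

theorem restrictScalars_span_monomial_image (G : Set (σ →₀ ℕ)) :
    (Ideal.span ((fun s => monomial s (1 : R)) '' G)).restrictScalars R =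
      restrictSupport R {d | ∀ g ∈ G, ¬ g ≤ d}ᶜ := by
  ext f
  simp [mem_ideal_span_monomial_image, mem_restrictSupport_iff, Set.subset_def]

theorem coe_basisRestrictSupport (S : Set (σ →₀ ℕ)) (d : S) :
    (basisRestrictSupport R S d : MvPolynomial σ R) = monomial d 1 := by
  classical
  have hmem : monomial (d : σ →₀ ℕ) (1 : R) ∈ restrictSupport R S := by simp
  suffices basisRestrictSupport R S d = ⟨_, hmem⟩ from congrArg Subtype.val this
  refine (basisRestrictSupport R S).repr.injective (Finsupp.ext fun m => ?_)
  change _ = coeff (m : σ →₀ ℕ) (monomial (d : σ →₀ ℕ) (1 : R))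
  simp [coeff_monomial, Finsupp.single_apply, Subtype.ext_iff]

noncomputable def basisQuotientSpanMonomial (G : Set (σ →₀ ℕ)) :
    Module.Basis {d | ∀ g ∈ G, ¬ g ≤ d} R
      (MvPolynomial σ R ⧸ Ideal.span ((fun s => monomial s (1 : R)) '' G)) :=
  (basisRestrictSupport R _).map
    ((Submodule.quotientEquivOfIsCompl _ _ (restrictScalars_span_monomial_image (R := R) G ▸
        (isCompl_restrictSupport_compl _).symm)).symm.trans
      (Submodule.Quotient.restrictScalarsEquiv R _))

theorem basisQuotientSpanMonomial_apply (G : Set (σ →₀ ℕ)) (d : {d | ∀ g ∈ G, ¬ g ≤ d}) :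
    basisQuotientSpanMonomial (R := R) G d = Ideal.Quotient.mk _ (monomial d 1) := by
  rw [basisQuotientSpanMonomial, Module.Basis.map_apply, LinearEquiv.trans_apply,
    Submodule.quotientEquivOfIsCompl_symm_apply, coe_basisRestrictSupport]
  rfl

theorem span_monomial_image_le_comap {f : MvPolynomial σ R →ₐ[R] MvPolynomial σ R}
    (hf : ∀ d, ∃ c : R, f (monomial d 1) = c • monomial d 1) (G : Set (σ →₀ ℕ)) :
    Ideal.span ((fun s => monomial s (1 : R)) '' G) ≤
      (Ideal.span ((fun s => monomial s (1 : R)) '' G)).comap f := by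
  rw [Ideal.span_le]
  rintro _ ⟨g, hg, rfl⟩
  obtain ⟨c, hc⟩ := hf g
  rw [SetLike.mem_coe, Ideal.mem_comap, hc]
  exact Submodule.smul_of_tower_mem _ c (Ideal.subset_span ⟨g, hg, rfl⟩)

end MvPolynomial

noncomputable def xyExponent (a b : ℕ) : Fin 2 →₀ ℕ := Finsupp.single 0 a + Finsupp.single 1 b

@[simp] theorem xyExponent_apply_zero (a b : ℕ) : xyExponent a b 0 = a := by simp [xyExponent]

@[simp] theorem xyExponent_apply_one (a b : ℕ) : xyExponent a b 1 = b := by simp [xyExponent]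

theorem xyExponent_le_iff {a b : ℕ} {d : Fin 2 →₀ ℕ} :
    xyExponent a b ≤ d ↔ a ≤ d 0 ∧ b ≤ d 1 := by
  simp [Finsupp.le_def, Fin.forall_fin_two]

theorem X_pow_mul_X_pow_eq_monomial {R : Type*} [CommSemiring R] (a b : ℕ) :
    (X 0 ^ a * X 1 ^ b : MvPolynomial (Fin 2) R) = monomial (xyExponent a b) 1 := by
  rw [X_pow_eq_monomial, X_pow_eq_monomial, monomial_mul, one_mul, xyExponent]

theorem aeval_X_neg_X_monomial {R : Type*} [CommRing R] (d : Fin 2 →₀ ℕ) (c : R) :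
    aeval ![X 0, -X 1] (monomial d c : MvPolynomial (Fin 2) R) =
      (-1 : R) ^ d 1 • monomial d c := by
  rw [aeval_monomial, monomial_eq, Finsupp.prod_fintype _ _ (by simp),
    Finsupp.prod_fintype _ _ (by simp), Fin.prod_univ_two, Fin.prod_univ_two]
  simp only [Matrix.cons_val_zero, Matrix.cons_val_one, map_pow, map_neg, map_one,
    algebraMap_eq, smul_eq_C_mul, neg_pow (X 1 : MvPolynomial (Fin 2) R)]
  ring

theorem aeval_X_neg_X_comp_self {R : Type*} [CommRing R] :
    (aeval ![X 0, -X 1]).comp (aeval ![X 0, -X 1]) = AlgHom.id R (MvPolynomial (Fin 2) R) := by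
  ext i
  fin_cases i <;> simp

section Partition

variable (l : List ℕ)

noncomputable def partitionIdealExponents : Set (Fin 2 →₀ ℕ) :=
  Set.range (fun a : Fin l.length => xyExponent a (l.get a)) ∪ {xyExponent l.length 0}

theorem span_partition_generators (R : Type*) [CommRing R] :
    Ideal.span (Set.range (fun a : Fin l.length =>
        (X 0 : MvPolynomial (Fin 2) R) ^ (a : ℕ) * X 1 ^ l.get a) ∪ {X 0 ^ l.length}) =
      Ideal.span ((fun s => monomial s (1 : R)) '' partitionIdealExponents l) := by
  rw [partitionIdealExponents, Set.image_union, Set.image_singleton, ← Set.range_comp]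
  simp only [Function.comp_def, X_pow_mul_X_pow_eq_monomial]
  rw [← X_pow_mul_X_pow_eq_monomial, pow_zero, mul_one]

noncomputable def youngCell (i : Σ a : Fin l.length, Fin (l.get a)) : Fin 2 →₀ ℕ :=
  xyExponent i.1 i.2

theorem youngCell_injective : Function.Injective (youngCell l) := by
  rintro ⟨a, j⟩ ⟨a', j'⟩ h
  have h0 := congrArg (· 0) h
  have h1 := congrArg (· 1) h
  simp only [youngCell, xyExponent_apply_zero, xyExponent_apply_one] at h0 h1
  obtain rfl := Fin.ext h0
  obtain rfl := Fin.ext h1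
  rfl

variable {l}

theorem range_youngCell (hsort : l.Pairwise (· ≥ ·)) :
    Set.range (youngCell l) = {d | ∀ g ∈ partitionIdealExponents l, ¬ g ≤ d} := by
  ext d
  simp only [Set.mem_range, Set.mem_ofPred_eq, partitionIdealExponents, Set.mem_union,
    Set.mem_singleton_iff, Set.mem_range]
  constructor
  · rintro ⟨⟨a, j⟩, rfl⟩ g (⟨b, rfl⟩ | rfl) hle <;>
      simp only [youngCell, xyExponent_le_iff, xyExponent_apply_zero, xyExponent_apply_one] at hle
    · have := hsort.rel_get_of_le (Fin.le_iff_val_le_val.2 hle.1)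
      have := j.isLt
      omega
    · exact absurd a.isLt (not_lt.2 hle.1)
  · intro hd
    have hk : d 0 < l.length := by
      by_contra! h
      exact hd _ (Or.inr rfl) (xyExponent_le_iff.2 ⟨h, Nat.zero_le _⟩)
    have hrow : d 1 < l.get ⟨d 0, hk⟩ := by
      by_contra! h
      exact hd _ (Or.inl ⟨_, rfl⟩) (xyExponent_le_iff.2 ⟨le_rfl, h⟩)
    refine ⟨⟨⟨d 0, hk⟩, ⟨d 1, hrow⟩⟩, ?_⟩
    ext i
    fin_cases i <;> simp [youngCell]

noncomputable def partitionQuotientBasis (R : Type*) [CommRing R] (hsort : l.Pairwise (· ≥ ·)) :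
    Module.Basis (Σ a : Fin l.length, Fin (l.get a)) R (MvPolynomial (Fin 2) R ⧸
      Ideal.span ((fun s => monomial s (1 : R)) '' partitionIdealExponents l)) :=
  (basisQuotientSpanMonomial _).reindex ((Equiv.ofInjective _ (youngCell_injective l)).trans
    (Equiv.setCongr (range_youngCell hsort))).symm

theorem partitionQuotientBasis_apply (R : Type*) [CommRing R] (hsort : l.Pairwise (· ≥ ·))
    (i : Σ a : Fin l.length, Fin (l.get a)) :
    partitionQuotientBasis R hsort i = Ideal.Quotient.mk _ (monomial (youngCell l i) 1) := by
  rw [partitionQuotientBasis, Module.Basis.reindex_apply, Equiv.symm_symm,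
    basisQuotientSpanMonomial_apply]
  rfl

end Partition

theorem card_youngCells (l : List ℕ) : Nat.card (Σ a : Fin l.length, Fin (l.get a)) = l.sum := by
  simp

theorem two_mul_card_youngCells_even (l : List ℕ) :
    2 * Nat.card {i : Σ a : Fin l.length, Fin (l.get a) // Even (i.2 : ℕ)} =
      l.sum + (l.filter (fun i => Odd i)).length := by
  rw [Nat.card_sigma_fin_even, ← List.two_mul_sum_map_count_even]
  simp [Fin.sum_univ_fun_getElem l (Nat.count Even)]

theorem stmt9_general (n : ℕ) (l : List ℕ) (hsort : l.Pairwise (· ≥ ·))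
    (hsum : l.sum = n)
    (I : Ideal (MvPolynomial (Fin 2) ℂ))
    (hI : I = Ideal.span
      (Set.range (fun a : Fin l.length =>
          (X 0 : MvPolynomial (Fin 2) ℂ) ^ (a : ℕ) * X 1 ^ l.get a) ∪
        {(X 0 : MvPolynomial (Fin 2) ℂ) ^ l.length}))
    (σ : MvPolynomial (Fin 2) ℂ →ₐ[ℂ] MvPolynomial (Fin 2) ℂ)
    (hσ : σ = aeval ![(X 0 : MvPolynomial (Fin 2) ℂ), -X 1]) :
    (∀ f ∈ I, σ f ∈ I) ∧
    ∃ T : Module.End ℂ (MvPolynomial (Fin 2) ℂ ⧸ I),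
      (∀ f, T (Ideal.Quotient.mk I f) = Ideal.Quotient.mk I (σ f)) ∧
      T ∘ₗ T = LinearMap.id ∧
      2 * Module.finrank ℂ (T.eigenspace 1) = n + (l.filter (fun i => Odd i)).length ∧
      (l.filter (fun i => Odd i)).length ≤ n ∧
      2 * Module.finrank ℂ (T.eigenspace (-1)) = n - (l.filter (fun i => Odd i)).length ∧
      n % 2 = (l.filter (fun i => Odd i)).length % 2 := by
  obtain rfl := hI.trans (span_partition_generators l ℂ)
  subst hσ hsum
  have hσI := span_monomial_image_le_comap
    (fun d => ⟨_, aeval_X_neg_X_monomial d (1 : ℂ)⟩) (partitionIdealExponents l)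
  set T : Module.End ℂ _ := (Ideal.quotientMapₐ _ _ hσI).toLinearMap
  have hT : ∀ f, T (Ideal.Quotient.mk _ f) = Ideal.Quotient.mk _ (aeval ![X 0, -X 1] f) :=
    fun f => rfl
  refine ⟨fun f hf => hσI hf, T, hT, ?_, ?_⟩
  · rw [← AlgHom.comp_toLinearMap, Ideal.quotientMapₐ_comp_self aeval_X_neg_X_comp_self,
      AlgHom.toLinearMap_id]
  set b := partitionQuotientBasis ℂ hsort
  have hb : ∀ i, T (b i) = (-1 : ℂ) ^ (i.2 : ℕ) • b i := by
    intro i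
    rw [partitionQuotientBasis_apply, hT, aeval_X_neg_X_monomial, ← Ideal.Quotient.mkₐ_eq_mk ℂ,
      map_smul]
    simp [youngCell]
  have hneg : (-1 : ℂ) ≠ 1 := by norm_num
  have h1 := Module.End.finrank_eigenspace_one_of_neg_one_pow_eigenbasis b hneg hb
  have h2 := Module.End.finrank_eigenspace_one_add_finrank_eigenspace_neg_one b hneg hb
  have heven := two_mul_card_youngCells_even l
  rw [card_youngCells] at h2
  omega

/-- For a partition `λ` of `n` (given as the sorted list `l` of its parts), the algebra
automorphism `σ` of `ℂ[x,y]` with `σ(x) = x`, `σ(y) = −y` maps the monomial ideal `I_λ` to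
itself, hence induces a linear involution `T` of `ℂ[x,y]/I_λ`; the `+1`-eigenspace of `T` has
dimension `(n + ℓ_odd(λ))/2` and the `−1`-eigenspace has dimension `(n − ℓ_odd(λ))/2`.
In particular `n ≡ ℓ_odd(λ) (mod 2)`. -/
theorem stmt9 (n : ℕ) (l : List ℕ) (hsort : l.Pairwise (· ≥ ·)) (hpos : ∀ i ∈ l, 0 < i)
    (hsum : l.sum = n)
    (I : Ideal (MvPolynomial (Fin 2) ℂ))
    (hI : I = Ideal.span
      (Set.range (fun a : Fin l.length =>
          (X 0 : MvPolynomial (Fin 2) ℂ) ^ (a : ℕ) * X 1 ^ l.get a) ∪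
        {(X 0 : MvPolynomial (Fin 2) ℂ) ^ l.length}))
    (σ : MvPolynomial (Fin 2) ℂ →ₐ[ℂ] MvPolynomial (Fin 2) ℂ)
    (hσ : σ = aeval ![(X 0 : MvPolynomial (Fin 2) ℂ), -X 1]) :
    (∀ f ∈ I, σ f ∈ I) ∧
    ∃ T : Module.End ℂ (MvPolynomial (Fin 2) ℂ ⧸ I),
      (∀ f, T (Ideal.Quotient.mk I f) = Ideal.Quotient.mk I (σ f)) ∧
      T ∘ₗ T = LinearMap.id ∧
      2 * Module.finrank ℂ (T.eigenspace 1) = n + (l.filter (fun i => Odd i)).length ∧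
      (l.filter (fun i => Odd i)).length ≤ n ∧
      2 * Module.finrank ℂ (T.eigenspace (-1)) = n - (l.filter (fun i => Odd i)).length ∧
      n % 2 = (l.filter (fun i => Odd i)).length % 2 :=
  stmt9_general n l hsort hsum I hI σ hσ
end
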